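/- For n even, DP_n is a Gorenstein polytope of codegree n and its normalized volume equals n²/4. -/

import Mathlib

open Matrix Finset Pointwise

variable (n : ℕ) [NeZero n]

/-- Permutation matrix of `σ`: entries `δ_{i, σ(j)}`. -/
def permMat (σ : Equiv.Perm (ZMod n)) : Matrix (ZMod n) (ZMod n) ℝ :=
  Matrix.of fun i j => if i = σ j then 1 else 0

/-- Rotation `x ↦ x + 1` of the regular n-gon with vertex set `ZMod n`. -/
def rot : Equiv.Perm (ZMod n) := Equiv.addRight 1

/-- Reflection `x ↦ -x` of the regular n-gon. -/
def rfl' : Equiv.Perm (ZMod n) := Equiv.neg (ZMod n)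

/-- The dihedral group `D_n ≤ S_n`, symmetries of the regular n-gon. -/
def dihedral : Subgroup (Equiv.Perm (ZMod n)) := Subgroup.closure {rot n, rfl' n}

/-- Adjacency matrix of the n-cycle `C_n`. -/
def cycAdj : Matrix (ZMod n) (ZMod n) ℝ :=
  Matrix.of fun i j => if j = i + 1 ∨ j = i - 1 then 1 else 0

/-- The permutation polytope `DP_n = conv{M_σ : σ ∈ D_n} ⊆ ℝ^{n×n}`. -/
def DP : Set (Matrix (ZMod n) (ZMod n) ℝ) :=
  convexHull ℝ {M | ∃ σ ∈ dihedral n, M = permMat n σ}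

/-- The cyclic shift matrix `R`. -/
def Rmat : Matrix (ZMod n) (ZMod n) ℝ := Matrix.of fun i j => if j = i + 1 then 1 else 0

/-- The `2n` rows of `W = [[I,...,I],[I,R,...,R^{n-1}]]`, viewed as vectors in
`ℝ^{n²} = Matrix (ZMod n) (ZMod n) ℝ`; the first matrix coordinate is the block index. -/
def Wrow : Bool × ZMod n → Matrix (ZMod n) (ZMod n) ℝ
  | (false, k) => Matrix.of fun _ j => if j = k then 1 else 0
  | (true, k) => Matrix.of fun b j => (Rmat n ^ b.val) k j

/-- The polytope `Q_n ⊆ ℝ^{n²}`. -/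
def Qpoly : Set (Matrix (ZMod n) (ZMod n) ℝ) := convexHull ℝ (Set.range (Wrow n))

/-- A point of `ℝ^{n²}` is a lattice point if all its coordinates are integers. -/
def IsInt (x : Matrix (ZMod n) (ZMod n) ℝ) : Prop := ∀ b j, ∃ z : ℤ, x b j = (z : ℝ)

/-
Every point of `k • DP_n` is `x_{pq} = a(p - q) + b(p + q)` with `a, b ≥ 0` of total mass `k`:
the vertices are the rotations `x ↦ x + c` and the reflections `x ↦ c - x`. For `n = 2m` the
indices `p - q` and `p + q` have the same parity, so mass can be moved between `a` and `b` inside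
a parity class; asking `b` to vanish somewhere on each class makes the representation unique, and
for lattice points it makes `a` and `b` integral. Splitting by parity, the lattice points of
`k • DP_{2m}` are pairs of data `(a, b)` on `m` points with `b` vanishing somewhere, each counted
by `(1 - X^m) / (1 - X)^{2m}`. So the Ehrhart series is `(1 - X^m)^2 / (1 - X)^{4m}`, and
`h* = (1 + X + ⋯ + X^{m-1})^2`: palindromic of degree `2m - 2`, with value `m^2` at `1`.
-/

section

variable (n : ℕ)

lemma rot_pow (k : ℕ) : rot n ^ k = Equiv.addRight (k : ZMod n) := by
  induction k with
  | zero => ext; simp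
  | succ k ih =>
    rw [pow_succ, ih]
    ext
    simp only [Equiv.Perm.mul_apply, Equiv.coe_addRight, rot, Nat.cast_succ]
    ring

def dpMap : (ZMod n ⊕ ZMod n → ℝ) →ₗ[ℝ] Matrix (ZMod n) (ZMod n) ℝ where
  toFun w := Matrix.of fun p q => w (.inl (p - q)) + w (.inr (p + q))
  map_add' v w := by ext; simp only [of_apply, Pi.add_apply, Matrix.add_apply]; ring
  map_smul' r w := by ext; simp only [of_apply, Pi.smul_apply, Matrix.smul_apply, smul_eq_mul,
    RingHom.id_apply]; ring

@[simp]
lemma dpMap_apply (w : ZMod n ⊕ ZMod n → ℝ) (p q : ZMod n) :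
    dpMap n w p q = w (.inl (p - q)) + w (.inr (p + q)) := rfl

lemma dpMap_basis (i : ZMod n ⊕ ZMod n) :
    dpMap n (fun j => if i = j then 1 else 0) =
      i.elim (fun c => permMat n (Equiv.addRight c)) (fun c => permMat n (Equiv.subLeft c)) := by
  ext p q
  rcases i with c | c
  · simp [permMat, eq_sub_iff_add_eq, eq_comm, add_comm]
  · simp [permMat, eq_sub_iff_add_eq, eq_comm]

end

lemma mem_dihedral_iff {σ : Equiv.Perm (ZMod n)} :
    σ ∈ dihedral n ↔ (∃ c, σ = Equiv.addRight c) ∨ ∃ c, σ = Equiv.subLeft c := by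
  constructor
  · intro hσ
    induction hσ using Subgroup.closure_induction with
    | mem τ hτ =>
      rcases hτ with rfl | rfl
      · exact .inl ⟨1, rfl⟩
      · exact .inr ⟨0, by ext; simp [rfl']⟩
    | one => exact .inl ⟨0, by ext; simp⟩
    | mul τ ρ _ _ hτ hρ =>
      rcases hτ with ⟨c, rfl⟩ | ⟨c, rfl⟩ <;> rcases hρ with ⟨d, rfl⟩ | ⟨d, rfl⟩
      · exact .inl ⟨d + c, by ext; simp [add_assoc]⟩
      · exact .inr ⟨d + c, by ext; simp [sub_add_eq_add_sub]⟩
      · exact .inr ⟨c - d, by ext; simp [sub_sub, add_comm]⟩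
      · exact .inl ⟨c - d, by ext; simp [sub_sub_eq_add_sub, add_sub_right_comm, add_comm]⟩
    | inv τ _ hτ =>
      rcases hτ with ⟨c, rfl⟩ | ⟨c, rfl⟩
      · exact .inl ⟨-c, by ext; simp⟩
      · exact .inr ⟨c, by ext; simp [neg_add_eq_sub]⟩
  · have hrot : rot n ∈ dihedral n := Subgroup.subset_closure (by simp)
    have hrfl : rfl' n ∈ dihedral n := Subgroup.subset_closure (by simp)
    have hadd (c : ZMod n) : Equiv.addRight c = rot n ^ c.val := by
      rw [rot_pow, ZMod.natCast_zmod_val]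
    rintro (⟨c, rfl⟩ | ⟨c, rfl⟩)
    · exact hadd c ▸ pow_mem hrot _
    · have : Equiv.subLeft c = Equiv.addRight c * rfl' n := by
        ext; simp [rfl', sub_eq_neg_add]
      exact this ▸ mul_mem (hadd c ▸ pow_mem hrot _) hrfl

lemma DP_eq_image_stdSimplex : DP n = dpMap n '' stdSimplex ℝ (ZMod n ⊕ ZMod n) := by
  have hvert : {M | ∃ σ ∈ dihedral n, M = permMat n σ} =
      dpMap n '' Set.range fun i j : ZMod n ⊕ ZMod n => if i = j then (1 : ℝ) else 0 := by
    ext M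
    simp only [Set.mem_ofPred_eq, ← Set.range_comp, Set.mem_range, Function.comp_def,
      dpMap_basis, mem_dihedral_iff]
    constructor
    · rintro ⟨σ, ⟨c, rfl⟩ | ⟨c, rfl⟩, rfl⟩
      exacts [⟨.inl c, rfl⟩, ⟨.inr c, rfl⟩]
    · rintro ⟨c | c, rfl⟩
      exacts [⟨_, .inl ⟨c, rfl⟩, rfl⟩, ⟨_, .inr ⟨c, rfl⟩, rfl⟩]
  rw [DP, hvert, ← LinearMap.image_convexHull, convexHull_basis_eq_stdSimplex]

lemma mem_smul_stdSimplex_iff {ι : Type*} [Fintype ι] [Nonempty ι] {r : ℝ} (hr : 0 ≤ r)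
    (w : ι → ℝ) : w ∈ r • stdSimplex ℝ ι ↔ (∀ i, 0 ≤ w i) ∧ ∑ i, w i = r := by
  classical
  rcases hr.eq_or_lt with rfl | hr
  · rw [Set.zero_smul_set ⟨_, ite_eq_mem_stdSimplex ℝ (Classical.arbitrary ι)⟩, Set.mem_zero]
    constructor
    · rintro rfl
      simp
    · rintro ⟨hw, hsum⟩
      ext i
      exact (Finset.sum_eq_zero_iff_of_nonneg fun i _ => hw i).1 hsum i (mem_univ i)
  · rw [Set.mem_smul_set_iff_inv_smul_mem₀ hr.ne']
    simp only [stdSimplex, Set.mem_ofPred_eq, Pi.smul_apply, smul_eq_mul, ← Finset.mul_sum,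
      mul_nonneg_iff_of_pos_left (inv_pos.2 hr), inv_mul_eq_one₀ hr.ne', eq_comm]

lemma mem_smul_DP_iff {r : ℝ} (hr : 0 ≤ r) (x : Matrix (ZMod n) (ZMod n) ℝ) :
    x ∈ r • DP n ↔ ∃ w, (∀ i, 0 ≤ w i) ∧ ∑ i, w i = r ∧ dpMap n w = x := by
  rw [DP_eq_image_stdSimplex, ← image_smul_set]
  simp only [Set.mem_image, mem_smul_stdSimplex_iff hr, and_assoc]

section Parity

variable (m : ℕ)

def parity : ZMod (2 * m) →+* ZMod 2 := ZMod.castHom (dvd_mul_right 2 m) (ZMod 2)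

lemma parity_sub_eq_parity_add (p q : ZMod (2 * m)) : parity m (p - q) = parity m (p + q) := by
  rw [map_sub, map_add, sub_eq_add_neg, ZMod.neg_eq_self_mod_two]

variable [NeZero (2 * m)]

noncomputable def parityHalfEquiv : ZMod 2 × Fin m ≃ ZMod (2 * m) :=
  Equiv.ofBijective (fun tj => ((2 * tj.2 + tj.1.val : ℕ) : ZMod (2 * m))) <| by
    rw [Fintype.bijective_iff_injective_and_card]
    refine ⟨?_, by simp [ZMod.card, mul_comm]⟩
    rintro ⟨t, j⟩ ⟨t', j'⟩ h
    have ht := ZMod.val_lt t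
    have ht' := ZMod.val_lt t'
    have h := congrArg ZMod.val h
    dsimp only at h
    rw [ZMod.val_cast_of_lt (by omega), ZMod.val_cast_of_lt (by omega)] at h
    simp only [Prod.mk.injEq, Fin.ext_iff, ← ZMod.val_injective 2 |>.eq_iff]
    omega

@[simp]
lemma parity_parityHalfEquiv (t : ZMod 2) (j : Fin m) :
    parity m (parityHalfEquiv m (t, j)) = t := by
  rw [show parityHalfEquiv m (t, j) = ((2 * j + t.val : ℕ) : ZMod (2 * m)) from rfl, map_natCast,
    Nat.cast_add, Nat.cast_mul, ZMod.natCast_self, zero_mul, zero_add, ZMod.natCast_zmod_val]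

lemma exists_sub_eq_add_eq {d s : ZMod (2 * m)} (h : parity m d = parity m s) :
    ∃ p q, p - q = d ∧ p + q = s := by
  obtain ⟨⟨t, j⟩, hj⟩ := (parityHalfEquiv m).surjective (s - d)
  have ht : t = 0 := by
    rw [← parity_parityHalfEquiv m t j, hj, map_sub, h, sub_self]
  subst ht
  refine ⟨j + d, j, by ring, ?_⟩
  simp only [parityHalfEquiv, Equiv.ofBijective_apply, Nat.cast_add, Nat.cast_mul, Nat.cast_ofNat,
    ZMod.val_zero, Nat.cast_zero, add_zero] at hj
  linear_combination hj

noncomputable def splitParity : (ZMod (2 * m) → ℕ) ≃ (Fin m → ℕ) × (Fin m → ℕ) :=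
  ((parityHalfEquiv m).symm.arrowCongr (Equiv.refl ℕ)).trans
    ((Equiv.curry _ _ _).trans (piFinTwoEquiv fun _ => Fin m → ℕ))

@[simp]
lemma splitParity_apply (b : ZMod (2 * m) → ℕ) :
    splitParity m b =
      (fun j => b (parityHalfEquiv m (0, j)), fun j => b (parityHalfEquiv m (1, j))) :=
  rfl

lemma sum_eq_sum_splitParity (b : ZMod (2 * m) → ℕ) :
    ∑ s, b s = ∑ j, (splitParity m b).1 j + ∑ j, (splitParity m b).2 j := by
  rw [← (parityHalfEquiv m).sum_comp, Fintype.sum_prod_type]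
  exact Fin.sum_univ_two _

lemma forall_exists_parity_eq_zero_iff (b : ZMod (2 * m) → ℕ) :
    (∀ e, ∃ s, parity m s = e ∧ b s = 0) ↔
      (∃ j, (splitParity m b).1 j = 0) ∧ ∃ j, (splitParity m b).2 j = 0 := by
  simp only [(parityHalfEquiv m).surjective.exists, Prod.exists, parity_parityHalfEquiv,
    exists_and_left, exists_eq_left, splitParity_apply]
  exact Fin.forall_fin_two

noncomputable def splitParitySubtype :
    {b : ZMod (2 * m) → ℕ // ∀ e, ∃ s, parity m s = e ∧ b s = 0} ≃
      {c : Fin m → ℕ // ∃ j, c j = 0} × {c : Fin m → ℕ // ∃ j, c j = 0} :=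
  ((splitParity m).subtypeEquiv (forall_exists_parity_eq_zero_iff m)).trans
    Equiv.subtypeProdEquivProd

end Parity

open PowerSeries

section CountSeries

variable {α β : Type*}

/-- `Nat.card` of an infinite fibre is `0`, hence the finiteness hypotheses below. -/
noncomputable def countSeries (R : Type*) [Semiring R] (w : α → ℕ) : PowerSeries R :=
  PowerSeries.mk fun k => (Nat.card {a // w a = k} : R)

variable {R : Type*}

@[simp]
lemma coeff_countSeries [Semiring R] (w : α → ℕ) (k : ℕ) :
    coeff k (countSeries R w) = Nat.card {a // w a = k} :=
  coeff_mk _ _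

lemma countSeries_congr [Semiring R] (e : α ≃ β) {v : α → ℕ} {w : β → ℕ}
    (h : ∀ a, w (e a) = v a) : countSeries R w = countSeries R v := by
  ext k
  simp only [coeff_countSeries]
  exact congrArg _ (Nat.card_congr (e.subtypeEquiv fun a => by rw [h])).symm

lemma countSeries_add_const [Semiring R] (w : α → ℕ) (c : ℕ) :
    countSeries R (fun a => w a + c) = X ^ c * countSeries R w := by
  ext k
  rw [coeff_X_pow_mul', coeff_countSeries]
  split_ifs with hc
  · rw [coeff_countSeries]
    exact congrArg _ (Nat.card_congr (Equiv.subtypeEquivRight fun a => by omega))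
  · have : IsEmpty {a // w a + c = k} := ⟨fun a => hc (by omega)⟩
    simp

lemma finite_fiber_subtype {w : α → ℕ} (hw : ∀ k, Finite {a // w a = k}) (P : α → Prop)
    (k : ℕ) : Finite {a : {a // P a} // w a = k} :=
  Finite.of_injective (fun a => (⟨a.1.1, a.2⟩ : {a // w a = k})) fun a b h => by
    simpa [Subtype.ext_iff] using h

lemma countSeries_prod [Semiring R] {v : α → ℕ} {w : β → ℕ} (hv : ∀ k, Finite {a // v a = k})
    (hw : ∀ k, Finite {b // w b = k}) :
    countSeries R (fun p : α × β => v p.1 + w p.2) = countSeries R v * countSeries R w := by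
  ext k
  simp only [coeff_mul, coeff_countSeries, ← Nat.cast_mul, ← Nat.cast_sum]
  congr 1
  let e : {p : α × β // v p.1 + w p.2 = k} ≃
      Σ ij : antidiagonal k, {a // v a = ij.1.1} × {b // w b = ij.1.2} :=
    { toFun p := ⟨⟨(v p.1.1, w p.1.2), mem_antidiagonal.2 p.2⟩, ⟨p.1.1, rfl⟩, ⟨p.1.2, rfl⟩⟩
      invFun x := ⟨(x.2.1, x.2.2), by rw [x.2.1.2, x.2.2.2]; exact mem_antidiagonal.1 x.1.2⟩
      left_inv _ := rfl
      right_inv := by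
        rintro ⟨⟨⟨i, j⟩, hij⟩, ⟨a, ha⟩, ⟨b, hb⟩⟩
        dsimp only at ha hb
        subst ha hb
        rfl }
  rw [Nat.card_congr e, Nat.card_sigma]
  simp only [Nat.card_prod]
  exact Finset.sum_coe_sort (antidiagonal k) fun ij =>
    Nat.card {a // v a = ij.1} * Nat.card {b // w b = ij.2}

lemma countSeries_subtype_add_compl [Semiring R] {w : α → ℕ} (hw : ∀ k, Finite {a // w a = k})
    (P : α → Prop) :
    countSeries R (fun a : {a // P a} => w a) + countSeries R (fun a : {a // ¬P a} => w a) =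
      countSeries R w := by
  classical
  ext k
  have := finite_fiber_subtype hw P k
  have := finite_fiber_subtype hw (¬P ·) k
  simp only [map_add, coeff_countSeries, ← Nat.cast_add, ← Nat.card_sum]
  congr 1
  have e (Q : α → Prop) : {a : {a // Q a} // w a = k} ≃ {a : {a // w a = k} // Q a} :=
    (Equiv.subtypeSubtypeEquivSubtypeInter Q (w · = k)).trans <|
      (Equiv.subtypeEquivRight fun _ => and_comm).trans
        (Equiv.subtypeSubtypeEquivSubtypeInter (w · = k) Q).symm
  exact Nat.card_congr (((e P).sumCongr (e (¬P ·))).trans (Equiv.sumCompl _))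

variable {ι : Type*} [Fintype ι]

noncomputable def sumFiberEquivFinsuppAntidiag [DecidableEq ι] (k : ℕ) :
    {f : ι → ℕ // ∑ i, f i = k} ≃ (univ : Finset ι).finsuppAntidiag k :=
  (Finsupp.equivFunOnFinite.symm.subtypeEquiv fun f => by
    simp [mem_finsuppAntidiag])

lemma finite_sum_fiber (k : ℕ) : Finite {f : ι → ℕ // ∑ i, f i = k} := by
  classical
  exact Finite.of_equiv _ (sumFiberEquivFinsuppAntidiag k).symm

lemma countSeries_sum [CommSemiring R] :
    countSeries R (fun f : ι → ℕ => ∑ i, f i) = (PowerSeries.mk 1) ^ Fintype.card ι := by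
  classical
  ext k
  rw [coeff_countSeries, Nat.card_congr (sumFiberEquivFinsuppAntidiag k), Nat.card_eq_fintype_card,
    Fintype.card_coe, ← Finset.card_univ, ← Finset.prod_const, coeff_prod]
  simp

lemma countSeries_exists_eq_zero [CommRing R] :
    countSeries R (fun f : {f : ι → ℕ // ∃ i, f i = 0} => ∑ i, f.1 i) =
      (1 - X ^ Fintype.card ι) * (PowerSeries.mk 1) ^ Fintype.card ι := by
  have hpos : countSeries R (fun f : {f : ι → ℕ // ¬∃ i, f i = 0} => ∑ i, f.1 i) =
      X ^ Fintype.card ι * (PowerSeries.mk 1) ^ Fintype.card ι := by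
    let e : (ι → ℕ) ≃ {f : ι → ℕ // ¬∃ i, f i = 0} :=
      { toFun f := ⟨f + 1, by simp⟩
        invFun f := f.1 - 1
        left_inv f := by ext; simp
        right_inv f := by
          ext i
          have := not_exists.1 f.2 i
          simp only [Pi.add_apply, Pi.sub_apply, Pi.one_apply]
          omega }
    rw [← countSeries_sum, ← countSeries_add_const]
    exact countSeries_congr e fun f => by simp [e, Finset.sum_add_distrib]
  rw [sub_mul, one_mul, ← hpos, ← countSeries_sum (R := R),
    ← countSeries_subtype_add_compl finite_sum_fiber (∃ i, · i = 0), add_sub_cancel_right]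

end CountSeries

lemma exists_nat_eq_of_nonneg {x : ℝ} (hx : 0 ≤ x) (hz : ∃ z : ℤ, x = z) : ∃ k : ℕ, x = k := by
  obtain ⟨z, rfl⟩ := hz
  lift z to ℕ using Int.cast_nonneg_iff.1 hx
  exact ⟨z, by simp⟩

section NormalRep

variable (m : ℕ) [NeZero (2 * m)]

/-- Normal forms of the representations `x_{pq} = a(p - q) + b(p + q)`: as `p - q` and `p + q`
have the same parity, moving a constant from `b` to `a` on a parity class does not change `x`,
and asking `b` to vanish somewhere on each class removes exactly this freedom. -/
abbrev NormalRep :=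
  (ZMod (2 * m) → ℕ) × {b : ZMod (2 * m) → ℕ // ∀ e, ∃ s, parity m s = e ∧ b s = 0}

namespace NormalRep

variable {m}

def weight (r : NormalRep m) : ℕ := ∑ d, r.1 d + ∑ s, r.2.1 s

def toMatrix (r : NormalRep m) : Matrix (ZMod (2 * m)) (ZMod (2 * m)) ℝ :=
  dpMap (2 * m) (Sum.elim (fun d => (r.1 d : ℝ)) fun s => (r.2.1 s : ℝ))

lemma toMatrix_injective : Function.Injective (toMatrix (m := m)) := by
  rintro ⟨a, b, hb⟩ ⟨a', b', hb'⟩ h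
  have key : ∀ d s, parity m d = parity m s → a d + b s = a' d + b' s := by
    intro d s hds
    obtain ⟨p, q, rfl, rfl⟩ := exists_sub_eq_add_eq m hds
    have := congrFun (congrFun h p) q
    simp only [toMatrix, dpMap_apply, Sum.elim_inl, Sum.elim_inr] at this
    exact_mod_cast this
  obtain rfl : a = a' := funext fun d => by
    obtain ⟨s, hs, hbs⟩ := hb (parity m d)
    obtain ⟨s', hs', hbs'⟩ := hb' (parity m d)
    have := key d s hs.symm
    have := key d s' hs'.symm
    omega
  obtain rfl : b = b' := funext fun s => by
    have := key s s rfl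
    omega
  rfl

end NormalRep

lemma exists_normal_weights {a b : ZMod (2 * m) → ℝ} (ha : 0 ≤ a) (hb : 0 ≤ b) :
    ∃ a' b' : ZMod (2 * m) → ℝ, 0 ≤ a' ∧ 0 ≤ b' ∧ (∀ e, ∃ s, parity m s = e ∧ b' s = 0) ∧
      ∑ d, a' d + ∑ s, b' s = ∑ d, a d + ∑ s, b s ∧
      dpMap (2 * m) (Sum.elim a' b') = dpMap (2 * m) (Sum.elim a b) := by
  classical
  have hmin (e : ZMod 2) : ∃ s, parity m s = e ∧ ∀ s', parity m s' = e → b s ≤ b s' := by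
    obtain ⟨s, hs, hs_min⟩ := (univ.filter (parity m · = e)).exists_min_image b
      ⟨(e.val : ZMod (2 * m)),
        mem_filter.2 ⟨mem_univ _, by rw [map_natCast, ZMod.natCast_zmod_val]⟩⟩
    exact ⟨s, (mem_filter.1 hs).2, fun s' hs' => hs_min s' (mem_filter.2 ⟨mem_univ _, hs'⟩)⟩
  choose s₀ hs₀ hmin using hmin
  refine ⟨fun d => a d + b (s₀ (parity m d)), fun s => b s - b (s₀ (parity m s)),
    fun d => add_nonneg (ha d) (hb _), fun s => sub_nonneg.2 (hmin _ s rfl),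
    fun e => ⟨s₀ e, hs₀ e, by simp [hs₀ e]⟩, ?_, ?_⟩
  · rw [sum_add_distrib, sum_sub_distrib]
    ring
  · ext p q
    simp [parity_sub_eq_parity_add]

lemma integral_of_normal {a b : ZMod (2 * m) → ℝ} (hb : ∀ e, ∃ s, parity m s = e ∧ b s = 0)
    (hx : IsInt (2 * m) (dpMap (2 * m) (Sum.elim a b))) :
    (∀ d, ∃ z : ℤ, a d = z) ∧ ∀ s, ∃ z : ℤ, b s = z := by
  have ha (d : ZMod (2 * m)) : ∃ z : ℤ, a d = z := by
    obtain ⟨s, hs, hbs⟩ := hb (parity m d)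
    obtain ⟨p, q, rfl, rfl⟩ := exists_sub_eq_add_eq m hs.symm
    simpa [hbs] using hx p q
  refine ⟨ha, fun s => ?_⟩
  obtain ⟨p, q, -, rfl⟩ := exists_sub_eq_add_eq m (rfl : parity m s = parity m s)
  obtain ⟨z, hz⟩ := hx p q
  obtain ⟨z', hz'⟩ := ha (p - q)
  simp only [dpMap_apply, Sum.elim_inl, Sum.elim_inr] at hz
  exact ⟨z - z', by push_cast; linarith⟩

lemma exists_normalRep {a b : ZMod (2 * m) → ℝ} (ha : 0 ≤ a) (hb : 0 ≤ b)
    (hx : IsInt (2 * m) (dpMap (2 * m) (Sum.elim a b))) :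
    ∃ r : NormalRep m, (r.weight : ℝ) = ∑ d, a d + ∑ s, b s ∧
      r.toMatrix = dpMap (2 * m) (Sum.elim a b) := by
  obtain ⟨a', b', ha', hb', hzero, hsum, hmap⟩ := exists_normal_weights m ha hb
  rw [← hmap] at hx ⊢
  obtain ⟨hA, hB⟩ := integral_of_normal m hzero hx
  choose A hA using fun d => exists_nat_eq_of_nonneg (ha' d) (hA d)
  choose B hB using fun s => exists_nat_eq_of_nonneg (hb' s) (hB s)
  obtain rfl : a' = fun d => (A d : ℝ) := funext hA
  obtain rfl : b' = fun s => (B s : ℝ) := funext hB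
  refine ⟨(A, ⟨B, fun e => ?_⟩), by simpa [NormalRep.weight] using hsum, rfl⟩
  obtain ⟨s, hs, hBs⟩ := hzero e
  exact ⟨s, hs, Nat.cast_eq_zero.1 hBs⟩

lemma latticePoints_eq_range (k : ℕ) :
    {x | x ∈ (k : ℝ) • DP (2 * m) ∧ IsInt (2 * m) x} =
      Set.range fun r : {r : NormalRep m // r.weight = k} => r.1.toMatrix := by
  ext x
  simp only [mem_smul_DP_iff _ k.cast_nonneg, Set.mem_ofPred_eq, Set.mem_range, Subtype.exists]
  constructor
  · rintro ⟨⟨w, hw, hsum, rfl⟩, hint⟩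
    rw [← Sum.elim_comp_inl_inr w] at hint ⊢
    obtain ⟨r, hr, hx⟩ := exists_normalRep m (fun d => hw _) (fun s => hw _) hint
    refine ⟨r, ?_, hx⟩
    exact_mod_cast hr.trans ((Fintype.sum_sum_type w).symm.trans hsum)
  · rintro ⟨r, rfl, rfl⟩
    refine ⟨⟨_, fun i => ?_, ?_, rfl⟩, fun p q => ⟨r.1 (p - q) + r.2.1 (p + q), ?_⟩⟩
    · rcases i with d | s <;> simp
    · simp [Fintype.sum_sum_type, NormalRep.weight]
    · simp [NormalRep.toMatrix]

lemma ncard_latticePoints (k : ℕ) :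
    {x | x ∈ (k : ℝ) • DP (2 * m) ∧ IsInt (2 * m) x}.ncard =
      Nat.card {r : NormalRep m // r.weight = k} := by
  rw [latticePoints_eq_range, ← Nat.card_coe_set_eq, Nat.card_range_of_injective]
  exact NormalRep.toMatrix_injective.comp Subtype.val_injective

end NormalRep

section Series

variable (m : ℕ) [NeZero (2 * m)]

lemma countSeries_vanishing_on_each_parity {R : Type*} [CommRing R] :
    countSeries R (fun b : {b : ZMod (2 * m) → ℕ // ∀ e, ∃ s, parity m s = e ∧ b s = 0} =>
      ∑ s, b.1 s) = ((1 - X ^ m) * (PowerSeries.mk 1) ^ m) ^ 2 := by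
  rw [← countSeries_congr (w := fun p => ∑ j, p.1.1 j + ∑ j, p.2.1 j) (splitParitySubtype m)
      fun b => (sum_eq_sum_splitParity m b.1).symm,
    countSeries_prod (finite_fiber_subtype finite_sum_fiber _)
      (finite_fiber_subtype finite_sum_fiber _),
    countSeries_exists_eq_zero, Fintype.card_fin, sq]

lemma countSeries_normalRep_weight {R : Type*} [CommRing R] :
    countSeries R (NormalRep.weight (m := m)) =
      ((1 - X ^ m) * (PowerSeries.mk 1) ^ (2 * m)) ^ 2 := by
  change countSeries R (fun r : NormalRep m => ∑ d, r.1 d + ∑ s, r.2.1 s) = _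
  rw [countSeries_prod finite_sum_fiber (finite_fiber_subtype finite_sum_fiber _),
    countSeries_sum, ZMod.card, countSeries_vanishing_on_each_parity]
  ring

lemma ehrhartSeries_DP :
    (PowerSeries.mk fun k : ℕ =>
        (({x | x ∈ (k : ℝ) • DP (2 * m) ∧ IsInt (2 * m) x}.ncard : ℝ))) =
      ((1 - X ^ m) * (PowerSeries.mk 1) ^ (2 * m)) ^ 2 := by
  rw [← countSeries_normalRep_weight]
  ext k
  rw [coeff_mk, ncard_latticePoints, coeff_countSeries]

end Series

lemma one_sub_X_pow_mul_mk_one {R : Type*} [CommRing R] (m : ℕ) :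
    ((1 : PowerSeries R) - X ^ m) * PowerSeries.mk 1 =
      ((∑ i ∈ range m, Polynomial.X ^ i : Polynomial R) : PowerSeries R) := by
  rw [← geom_sum_mul_neg, mul_assoc, mul_comm (1 - X), mk_one_mul_one_sub_eq_one, mul_one,
    ← Polynomial.coeToPowerSeries.ringHom_apply, map_sum]
  simp [Polynomial.coeToPowerSeries.ringHom_apply]

lemma ehrhartSeries_DP_mul_one_sub_X_pow (m : ℕ) [NeZero (2 * m)] :
    (PowerSeries.mk fun k : ℕ =>
        (({x | x ∈ (k : ℝ) • DP (2 * m) ∧ IsInt (2 * m) x}.ncard : ℝ))) *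
      (1 - X) ^ (2 * (2 * m) - 2) =
      (((∑ i ∈ range m, Polynomial.X ^ i) ^ 2 : Polynomial ℝ) : PowerSeries ℝ) := by
  obtain ⟨N, hN⟩ : ∃ N, 2 * m = N + 1 := Nat.exists_eq_succ_of_ne_zero (NeZero.ne _)
  rw [ehrhartSeries_DP, hN, show 2 * (N + 1) - 2 = 2 * N by omega, Polynomial.coe_pow,
    ← one_sub_X_pow_mul_mk_one]
  calc (((1 : PowerSeries ℝ) - X ^ m) * PowerSeries.mk 1 ^ (N + 1)) ^ 2 * (1 - X) ^ (2 * N)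
      = ((1 - X ^ m) * PowerSeries.mk 1) ^ 2 * (PowerSeries.mk 1 * (1 - X)) ^ (2 * N) := by
        rw [mul_pow (PowerSeries.mk 1)]
        ring
    _ = _ := by rw [mk_one_mul_one_sub_eq_one, one_pow, mul_one]

section GeomSumSq

variable {R : Type*}

lemma coeff_geom_sum_sq [Semiring R] (m i : ℕ) :
    ((∑ j ∈ range m, Polynomial.X ^ j : Polynomial R) ^ 2).coeff i =
      ((min (i + 1) m - (i + 1 - m) : ℕ) : R) := by
  simp only [sq, Polynomial.coeff_mul, Finset.Nat.sum_antidiagonal_eq_sum_range_succ_mk,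
    Polynomial.finsetSum_coeff, Polynomial.coeff_X_pow, sum_ite_eq, mem_range,
    ite_zero_mul_ite_zero, mul_one]
  rw [sum_boole]
  congr 1
  rw [← Nat.card_Ico]
  congr 1
  ext u
  simp only [mem_filter, mem_range, mem_Ico]
  omega

lemma sum_coeff_geom_sum_sq [CommSemiring R] {m : ℕ} (hm : m ≠ 0) :
    ∑ i ∈ range (2 * m - 1), ((∑ j ∈ range m, Polynomial.X ^ j : Polynomial R) ^ 2).coeff i =
      (m : R) ^ 2 := by
  have hdeg : ((∑ j ∈ range m, Polynomial.X ^ j : Polynomial R) ^ 2).natDegree < 2 * m - 1 := by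
    suffices ((∑ j ∈ range m, Polynomial.X ^ j : Polynomial R) ^ 2).natDegree ≤ 2 * m - 2 by
      omega
    refine Polynomial.natDegree_le_iff_coeff_eq_zero.2 fun i hi => ?_
    rw [coeff_geom_sum_sq, show min (i + 1) m - (i + 1 - m) = 0 by omega, Nat.cast_zero]
  simpa using (Polynomial.eval_eq_sum_range' hdeg (1 : R)).symm

end GeomSumSq

theorem DP_even_Gorenstein_and_volume_general (m : ℕ) [NeZero (2 * m)] :
    ∀ h : PowerSeries ℝ,
      h = (PowerSeries.mk fun k : ℕ =>
            (({x | x ∈ (k : ℝ) • DP (2 * m) ∧ IsInt (2 * m) x}.ncard : ℝ)))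
          * (1 - PowerSeries.X) ^ (2 * (2 * m) - 2) →
      (∀ i, 2 * m - 2 < i → PowerSeries.coeff i h = 0) ∧
      PowerSeries.coeff (2 * m - 2) h ≠ 0 ∧
      (∀ i ≤ 2 * m - 2, PowerSeries.coeff i h = PowerSeries.coeff (2 * m - 2 - i) h) ∧
      ∑ i ∈ Finset.range (2 * m - 1), PowerSeries.coeff i h = (m : ℝ) ^ 2 := by
  rintro h rfl
  have hm : m ≠ 0 := fun hm => NeZero.ne (2 * m) (by rw [hm, mul_zero])
  simp only [ehrhartSeries_DP_mul_one_sub_X_pow, Polynomial.coeff_coe]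
  refine ⟨fun i hi => ?_, ?_, fun i hi => ?_, sum_coeff_geom_sum_sq hm⟩ <;>
    simp only [coeff_geom_sum_sq]
  · rw [show min (i + 1) m - (i + 1 - m) = 0 by omega, Nat.cast_zero]
  · rw [show min (2 * m - 2 + 1) m - (2 * m - 2 + 1 - m) = 1 by omega, Nat.cast_one]
    exact one_ne_zero
  · congr 1
    omega

/-- for even `n = 2m`, `DP_n` is Gorenstein of codegree `n` (its
`h*`-polynomial has degree `2m-2 = (dim+1) - n` and is symmetric) and its normalized
volume (the sum of the `h*`-vector entries) equals `n²/4 = m²`. -/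
theorem DP_even_Gorenstein_and_volume (m : ℕ) [NeZero (2 * m)] (hm : 2 ≤ m) :
    ∀ h : PowerSeries ℝ,
      h = (PowerSeries.mk fun k : ℕ =>
            (({x | x ∈ (k : ℝ) • DP (2 * m) ∧ IsInt (2 * m) x}.ncard : ℝ)))
          * (1 - PowerSeries.X) ^ (2 * (2 * m) - 2) →
      (∀ i, 2 * m - 2 < i → PowerSeries.coeff i h = 0) ∧
      PowerSeries.coeff (2 * m - 2) h ≠ 0 ∧
      (∀ i ≤ 2 * m - 2, PowerSeries.coeff i h = PowerSeries.coeff (2 * m - 2 - i) h) ∧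
      ∑ i ∈ Finset.range (2 * m - 1), PowerSeries.coeff i h = (m : ℝ) ^ 2 :=
  DP_even_Gorenstein_and_volume_general m
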